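/- Let A be a commutative ring and suppose a, b, λ ∈ A^× are units such that a² − 1, b² − 1, (ab)² − 1 and λ² − 1 are all units in A. Then the 2-chain F̃(a,b)_λ := [D(a)|D(b)] + Θ̃_a + Θ̃_b − Θ̃_{ab} − Θ_1 + Ψ_{ab+(ab)⁻¹,λ} − Ψ_{a+a⁻¹,λ} − Ψ_{b+b⁻¹,λ} + Ψ_{2,λ} − Ψ_{−1,λ} in the degree-2 term of the bar complex of SL₂(A) with trivial ℤ coefficients is a cycle, i.e. its image under the bar differential d₂ is zero; hence it represents a class C̃(a,b)_λ ∈ H₂(SL₂(A), ℤ). -/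

import Mathlib

noncomputable section

variable {A : Type*} [CommRing A]

/-- The elementary matrix `E₁₂(x) = (1, x; 0, 1)` in `SL₂(A)`. -/
def E12 (x : A) : Matrix.SpecialLinearGroup (Fin 2) A :=
  ⟨!![1, x; 0, 1], by simp [Matrix.det_fin_two_of]⟩

/-- The elementary matrix `E₂₁(y) = (1, 0; y, 1)` in `SL₂(A)`. -/
def E21 (y : A) : Matrix.SpecialLinearGroup (Fin 2) A :=
  ⟨!![1, 0; y, 1], by simp [Matrix.det_fin_two_of]⟩

/-- The diagonal matrix `D(u) = (u, 0; 0, u⁻¹)` in `SL₂(A)`. -/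
def Dm (u : Aˣ) : Matrix.SpecialLinearGroup (Fin 2) A :=
  ⟨!![(u : A), 0; 0, ((u⁻¹ : Aˣ) : A)], by simp [Matrix.det_fin_two_of]⟩

/-- The matrix `w = (0, 1; -1, 0)` in `SL₂(A)`. -/
def wm : Matrix.SpecialLinearGroup (Fin 2) A :=
  ⟨!![0, 1; -1, 0], by norm_num [Matrix.det_fin_two_of]⟩

/-- The matrix `G_a = (0, -1; 1, a + a⁻¹)` in `SL₂(A)`. -/
def Gm (a : Aˣ) : Matrix.SpecialLinearGroup (Fin 2) A :=
  ⟨!![0, -1; 1, (a : A) + ((a⁻¹ : Aˣ) : A)], by norm_num [Matrix.det_fin_two_of]⟩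

/-- The matrix `H_a = E₂₁(a)`. -/
def Hm (a : Aˣ) : Matrix.SpecialLinearGroup (Fin 2) A :=
  E21 (a : A)

/-- The matrix `R_a = H_a G_a H_a⁻¹ = (a, -1; 0, a⁻¹)`. -/
def Rm (a : Aˣ) : Matrix.SpecialLinearGroup (Fin 2) A :=
  Hm a * Gm a * (Hm a)⁻¹

/-- Degree-2 bar chains of `G` with trivial `ℤ` coefficients; `[g|h]` is `single (g, h) 1`. -/
abbrev barC2 (G : Type*) := (G × G) →₀ ℤ

/-- Degree-2 differential of the bar complex of `G` with trivial `ℤ` coefficients: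
`d₂([g|h]) = [h] - [gh] + [g]`. -/
def barD2 (G : Type*) [Group G] : ((G × G) →₀ ℤ) →ₗ[ℤ] (G →₀ ℤ) :=
  Finsupp.lsum ℤ fun p => LinearMap.toSpanSingleton ℤ _
    (Finsupp.single p.2 1 - Finsupp.single (p.1 * p.2) 1 + Finsupp.single p.1 1)

/-- The 2-chain `Θ_a = [H_a|G_a] - [R_a|H_a] + [w⁻¹|wG_a]`. -/
def Theta (a : Aˣ) : barC2 (Matrix.SpecialLinearGroup (Fin 2) A) :=
  Finsupp.single (Hm a, Gm a) 1 - Finsupp.single (Rm a, Hm a) 1 +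
    Finsupp.single (wm⁻¹, wm * Gm a) 1

/-- The 2-chain `Ψ_{x,λ} = [E₁₂(x)|E₁₂(x′)D(λ)] - [D(λ)|E₁₂(x′)] + [E₁₂(x′)|D(λ)]`, where
`x′ = x/(λ² - 1)`. -/
def Psi (lam : Aˣ) (x : A) : barC2 (Matrix.SpecialLinearGroup (Fin 2) A) :=
  Finsupp.single (E12 x, E12 (Ring.inverse ((lam : A) ^ 2 - 1) * x) * Dm lam) 1 -
    Finsupp.single (Dm lam, E12 (Ring.inverse ((lam : A) ^ 2 - 1) * x)) 1 +
    Finsupp.single (E12 (Ring.inverse ((lam : A) ^ 2 - 1) * x), Dm lam) 1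

/-- The 2-chain `F(a,b)_λ` of Proposition 7.1 (`prop:fab`). -/
def Fc (a b lam : Aˣ) : barC2 (Matrix.SpecialLinearGroup (Fin 2) A) :=
  Finsupp.single (Rm a, Rm b) 1 +
    Finsupp.single (Rm a * Rm b, (Rm a * Rm b)⁻¹ * Rm (a * b)) 1 +
    Theta a + Theta b - Theta (a * b) - Theta 1 +
    Psi lam (((a * b : Aˣ) : A) + (((a * b)⁻¹ : Aˣ) : A)) -
    Psi lam ((a : A) + ((a⁻¹ : Aˣ) : A)) -
    Psi lam ((b : A) + ((b⁻¹ : Aˣ) : A)) +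
    Psi lam 2 - Psi lam (-1) +
    Psi lam ((((a * b)⁻¹ : Aˣ) : A) * ((a : A) + ((b⁻¹ : Aˣ) : A) - 1))

/-- The matrix `H̃_a = (1/(1-a), a/(1-a); a/(1+a), 1/(1+a))` in `SL₂(A)`, defined for a unit
`a` with `a² − 1` a unit. -/
def Htilde (a : Aˣ) (h : IsUnit ((a : A) ^ 2 - 1)) : Matrix.SpecialLinearGroup (Fin 2) A :=
  ⟨!![Ring.inverse (1 - (a : A)), (a : A) * Ring.inverse (1 - (a : A));
      (a : A) * Ring.inverse (1 + (a : A)), Ring.inverse (1 + (a : A))], by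
    have hfac : IsUnit (((1 : A) - (a : A)) * (1 + (a : A))) := by
      have : ((1 : A) - (a : A)) * (1 + (a : A)) = -(((a : A)) ^ 2 - 1) := by ring
      rw [this]
      exact h.neg
    have hu1 : IsUnit ((1 : A) - (a : A)) := isUnit_of_mul_isUnit_left hfac
    have hu2 : IsUnit ((1 : A) + (a : A)) := isUnit_of_mul_isUnit_right hfac
    rw [Matrix.det_fin_two_of]
    have key : Ring.inverse (1 - (a : A)) * Ring.inverse (1 + (a : A)) -
        (a : A) * Ring.inverse (1 - (a : A)) * ((a : A) * Ring.inverse (1 + (a : A))) =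
        (((1 : A) - (a : A)) * Ring.inverse (1 - (a : A))) *
          (((1 : A) + (a : A)) * Ring.inverse (1 + (a : A))) := by ring
    rw [key, Ring.mul_inverse_cancel _ hu1, Ring.mul_inverse_cancel _ hu2, one_mul]⟩

/-- The 2-chain `Θ̃_a = [H̃_a|G_a] - [D(a)|H̃_a] + [w⁻¹|wG_a]`. -/
def ThetaT (a : Aˣ) (h : IsUnit ((a : A) ^ 2 - 1)) :
    barC2 (Matrix.SpecialLinearGroup (Fin 2) A) :=
  Finsupp.single (Htilde a h, Gm a) 1 - Finsupp.single (Dm a, Htilde a h) 1 +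
    Finsupp.single (wm⁻¹, wm * Gm a) 1

/-- The 2-chain `F̃(a,b)_λ` of Proposition 7.5 (`prop:var`). -/
def FcT (a b lam : Aˣ) (ha : IsUnit ((a : A) ^ 2 - 1)) (hb : IsUnit ((b : A) ^ 2 - 1))
    (hab : IsUnit ((((a * b : Aˣ)) : A) ^ 2 - 1)) :
    barC2 (Matrix.SpecialLinearGroup (Fin 2) A) :=
  Finsupp.single (Dm a, Dm b) 1 + ThetaT a ha + ThetaT b hb - ThetaT (a * b) hab - Theta 1 +
    Psi lam (((a * b : Aˣ) : A) + (((a * b)⁻¹ : Aˣ) : A)) -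
    Psi lam ((a : A) + ((a⁻¹ : Aˣ) : A)) -
    Psi lam ((b : A) + ((b⁻¹ : Aˣ) : A)) +
    Psi lam 2 - Psi lam (-1)

/-! Since `H̃_a G_a = D(a) H̃_a` and `H_a G_a = R_a H_a`, the conjugation terms give
`d Θ̃_a = [E₁₂(a + a⁻¹)] + [w⁻¹] − [D(a)]` and `d Θ_a = [E₁₂(a + a⁻¹)] + [w⁻¹] − [R_a]`, with
`R_1 = E₁₂(−1)`. Since `D(λ) E₁₂(x′) = E₁₂(x) E₁₂(x′) D(λ)`, `d Ψ_{x,λ} = [E₁₂(x)]`.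
With `d[D(a)|D(b)] = [D(b)] − [D(ab)] + [D(a)]` everything cancels. -/

open Finsupp

section BarDifferential

variable {G : Type*} [Group G]

lemma barD2_single (g h : G) :
    barD2 G (single (g, h) 1) = single h 1 - single (g * h) 1 + single g 1 := by
  simp [barD2]

lemma barD2_single_sub_single_of_mul_eq {g h k : G} (hk : h * g = k * h) :
    barD2 G (single (h, g) 1 - single (k, h) 1) = single g 1 - single k 1 := by
  rw [map_sub, barD2_single, barD2_single, hk]
  abel

lemma barD2_single_inv_mul (w g : G) :
    barD2 G (single (w⁻¹, w * g) 1) = single (w * g) 1 - single g 1 + single w⁻¹ 1 := by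
  rw [barD2_single, inv_mul_cancel_left]

lemma barD2_single_sub_single_add_single_of_mul_eq {x y d : G} (hd : d * y = x * y * d) :
    barD2 G (single (x, y * d) 1 - single (d, y) 1 + single (y, d) 1) = single x 1 := by
  simp only [map_add, map_sub, barD2_single, hd, ← mul_assoc]
  abel

end BarDifferential

lemma E12_mul_E12 (x y : A) : E12 x * E12 y = E12 (x + y) := by
  ext i j
  simp only [Matrix.SpecialLinearGroup.coe_mul]
  fin_cases i <;> fin_cases j <;> simp [E12, add_comm]

lemma Dm_mul_Dm (u v : Aˣ) : Dm u * Dm v = Dm (u * v) := by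
  ext i j
  simp only [Matrix.SpecialLinearGroup.coe_mul]
  fin_cases i <;> fin_cases j <;> simp [Dm, mul_comm]

lemma Dm_mul_E12 (u : Aˣ) (y : A) : Dm u * E12 y = E12 ((u : A) ^ 2 * y) * Dm u := by
  ext i j
  simp only [Matrix.SpecialLinearGroup.coe_mul]
  fin_cases i <;> fin_cases j <;> simp [Dm, E12]
  linear_combination (-(u : A) * y) * u.mul_inv

lemma wm_mul_Gm (a : Aˣ) : wm * Gm a = E12 ((a : A) + ((a⁻¹ : Aˣ) : A)) := by
  ext i j
  simp only [Matrix.SpecialLinearGroup.coe_mul]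
  fin_cases i <;> fin_cases j <;> simp [E12, wm, Gm]

lemma Hm_mul_Gm (a : Aˣ) : Hm a * Gm a = Rm a * Hm a := by
  simp [Rm]

lemma Rm_one : (Rm 1 : Matrix.SpecialLinearGroup (Fin 2) A) = E12 (-1) := by
  rw [Rm, mul_inv_eq_iff_eq_mul]
  ext i j
  simp only [Matrix.SpecialLinearGroup.coe_mul]
  fin_cases i <;> fin_cases j <;> simp [E12, Hm, E21, Gm]

lemma Htilde_mul_Gm (a : Aˣ) (h : IsUnit ((a : A) ^ 2 - 1)) :
    Htilde a h * Gm a = Dm a * Htilde a h := by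
  ext i j
  simp only [Matrix.SpecialLinearGroup.coe_mul]
  fin_cases i <;> fin_cases j <;> simp [Htilde, Dm, Gm]
  · linear_combination Ring.inverse (1 - (a : A)) * a.mul_inv
  · ring

lemma barD2_Theta (a : Aˣ) :
    barD2 _ (Theta a) = single (E12 ((a : A) + ((a⁻¹ : Aˣ) : A))) 1 + single wm⁻¹ 1 -
      single (Rm a) 1 := by
  rw [Theta, map_add, barD2_single_sub_single_of_mul_eq (Hm_mul_Gm a), barD2_single_inv_mul,
    wm_mul_Gm]
  abel

lemma barD2_ThetaT (a : Aˣ) (h : IsUnit ((a : A) ^ 2 - 1)) :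
    barD2 _ (ThetaT a h) = single (E12 ((a : A) + ((a⁻¹ : Aˣ) : A))) 1 + single wm⁻¹ 1 -
      single (Dm a) 1 := by
  rw [ThetaT, map_add, barD2_single_sub_single_of_mul_eq (Htilde_mul_Gm a h),
    barD2_single_inv_mul, wm_mul_Gm]
  abel

lemma barD2_Psi {lam : Aˣ} (hlam : IsUnit ((lam : A) ^ 2 - 1)) (x : A) :
    barD2 _ (Psi lam x) = single (E12 x) 1 := by
  set x' := Ring.inverse ((lam : A) ^ 2 - 1) * x
  have hx' : (lam : A) ^ 2 * x' = x + x' := by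
    linear_combination x * Ring.mul_inverse_cancel _ hlam
  apply barD2_single_sub_single_add_single_of_mul_eq
  rw [Dm_mul_E12, hx', E12_mul_E12]

/-- if `a, b, λ` are units of a commutative ring `A` such that `a² − 1`,
`b² − 1`, `(ab)² − 1` and `λ² − 1` are all units, then the 2-chain `F̃(a,b)_λ` is a cycle in
the bar complex of `SL₂(A)` with trivial `ℤ` coefficients, hence represents a homology class
`C̃(a,b)_λ ∈ H₂(SL₂(A), ℤ)`. -/
theorem stmt17 (A : Type*) [CommRing A] (a b lam : Aˣ)
    (ha : IsUnit ((a : A) ^ 2 - 1)) (hb : IsUnit ((b : A) ^ 2 - 1))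
    (hab : IsUnit ((((a * b : Aˣ)) : A) ^ 2 - 1)) (hlam : IsUnit ((lam : A) ^ 2 - 1)) :
    barD2 (Matrix.SpecialLinearGroup (Fin 2) A) (FcT a b lam ha hb hab) = 0 := by
  have h_one : ((1 : Aˣ) : A) + (((1 : Aˣ)⁻¹ : Aˣ) : A) = 2 := by norm_num
  simp only [FcT, map_add, map_sub, barD2_single, Dm_mul_Dm, barD2_ThetaT, barD2_Theta, Rm_one,
    h_one, barD2_Psi hlam]
  abel
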